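/- For the 4×4 real symmetric matrix M with rows (2,0,0,1),(0,1,1,0),(0,1,1,0),(1,0,0,2), and any unit vectors x,y ∈ ℂ², one has ⟨x⊗y|M|x⊗y⟩ ≤ 5/2, with equality attained at |x₁|=|x₂|=|y₁|=|y₂|=1/√2 with Re(x₁x̄₂)Re(y₁ȳ₂)=1/4. -/

import Mathlib

/-!
Writing `M = 1 + (1 + Z ⊗ Z) / 2 + X ⊗ X` with the Pauli matrices `X` and `Z`, the expectation of
`M` in `x ⊗ y` is `3/2 + Z_x Z_y / 2 + X_x X_y` for the Bloch coordinates `X_x = 2 Re(x₁ x̄₂)`,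
`Z_x = |x₁|² - |x₂|²` of a unit vector, which satisfy `X_x² + Z_x² ≤ 1`. Then
`Z_x Z_y / 2 + X_x X_y ≤ (Z_x² + Z_y²) / 2 + (X_x² + X_y²) / 2 ≤ 1`; equality holds when
`Z_x = Z_y = 0` and `X_x X_y = 1`.
-/

open Matrix

/-- Kronecker product vector of `x, y ∈ ℂ²` in the ordered basis
`(e₁⊗f₁, e₁⊗f₂, e₂⊗f₁, e₂⊗f₂)`. -/
def kvec (x y : Fin 2 → ℂ) : Fin 4 → ℂ := ![x 0 * y 0, x 0 * y 1, x 1 * y 0, x 1 * y 1]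

open ComplexConjugate

def blochX (x : Fin 2 → ℂ) : ℝ := 2 * (x 0 * conj (x 1)).re

noncomputable def blochZ (x : Fin 2 → ℂ) : ℝ := ‖x 0‖ ^ 2 - ‖x 1‖ ^ 2

lemma re_star_dotProduct_self (x : Fin 2 → ℂ) :
    (star x ⬝ᵥ x).re = ‖x 0‖ ^ 2 + ‖x 1‖ ^ 2 := by
  simp only [dotProduct, Fin.sum_univ_two, Pi.star_apply, RCLike.star_def, Complex.add_re,
    Complex.conj_mul', ← Complex.ofReal_pow, Complex.ofReal_re]

lemma blochX_sq_add_blochZ_sq (x : Fin 2 → ℂ) :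
    blochX x ^ 2 + blochZ x ^ 2 ≤ (‖x 0‖ ^ 2 + ‖x 1‖ ^ 2) ^ 2 := by
  have h : (x 0 * conj (x 1)).re ^ 2 ≤ ‖x 0‖ ^ 2 * ‖x 1‖ ^ 2 := by
    rw [← mul_pow, ← Complex.norm_conj (x 1), ← norm_mul, ← sq_abs]
    exact pow_le_pow_left₀ (abs_nonneg _) (Complex.abs_re_le_norm _) 2
  unfold blochX blochZ
  nlinarith

lemma re_star_kvec_dotProduct_mulVec_kvec (x y : Fin 2 → ℂ) :
    (star (kvec x y) ⬝ᵥ (!![2,0,0,1; 0,1,1,0; 0,1,1,0; 1,0,0,2] : Matrix (Fin 4) (Fin 4) ℂ) *ᵥ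
      kvec x y).re =
    3 / 2 * ((‖x 0‖ ^ 2 + ‖x 1‖ ^ 2) * (‖y 0‖ ^ 2 + ‖y 1‖ ^ 2)) + blochZ x * blochZ y / 2 +
      blochX x * blochX y := by
  simp only [kvec, blochX, blochZ, Matrix.mulVec, dotProduct, Fin.sum_univ_four,
    Complex.sq_norm, Complex.normSq_apply, Pi.star_apply, RCLike.star_def, Matrix.of_apply,
    Matrix.cons_val', Matrix.cons_val_zero, Matrix.cons_val_one, Matrix.cons_val_two,
    Matrix.cons_val_three, Matrix.cons_val_fin_one, Matrix.head_cons, Matrix.tail_cons,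
    Matrix.empty_val', Matrix.head_fin_const, Complex.add_re, Complex.add_im,
    Complex.mul_re, Complex.mul_im, Complex.conj_re, Complex.conj_im, Complex.re_ofNat,
    Complex.im_ofNat, Complex.one_re, Complex.one_im, Complex.zero_re, Complex.zero_im]
  ring

lemma blochZ_mul_div_two_add_blochX_mul_le_one {x y : Fin 2 → ℂ}
    (hx : ‖x 0‖ ^ 2 + ‖x 1‖ ^ 2 = 1) (hy : ‖y 0‖ ^ 2 + ‖y 1‖ ^ 2 = 1) :
    blochZ x * blochZ y / 2 + blochX x * blochX y ≤ 1 := by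
  have hx' := blochX_sq_add_blochZ_sq x
  have hy' := blochX_sq_add_blochZ_sq y
  rw [hx] at hx'
  rw [hy] at hy'
  nlinarith [sq_nonneg (blochZ x - blochZ y), sq_nonneg (blochX x - blochX y),
    sq_nonneg (blochZ x), sq_nonneg (blochZ y)]

lemma sq_eq_half_of_eq_inv_sqrt_two {r : ℝ} (h : r = 1 / Real.sqrt 2) : r ^ 2 = 1 / 2 := by
  rw [h, div_pow, one_pow, Real.sq_sqrt zero_le_two]

/-- For `M = [[2,0,0,1],[0,1,1,0],[0,1,1,0],[1,0,0,2]]` and unit `x, y ∈ ℂ²` one has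
`⟨x⊗y|M|x⊗y⟩ ≤ 5/2`, with equality when `|x₁|=|x₂|=|y₁|=|y₂|=1/√2` and
`Re(x₁ x̄₂) Re(y₁ ȳ₂) = 1/4`. -/
theorem expectation_le_five_halves :
    let M : Matrix (Fin 4) (Fin 4) ℂ := !![2,0,0,1; 0,1,1,0; 0,1,1,0; 1,0,0,2]
    (∀ x y : Fin 2 → ℂ, star x ⬝ᵥ x = 1 → star y ⬝ᵥ y = 1 →
      (star (kvec x y) ⬝ᵥ M.mulVec (kvec x y)).re ≤ 5 / 2) ∧
    (∀ x y : Fin 2 → ℂ, star x ⬝ᵥ x = 1 → star y ⬝ᵥ y = 1 →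
      (∀ i, ‖x i‖ = 1 / Real.sqrt 2) →
      (∀ i, ‖y i‖ = 1 / Real.sqrt 2) →
      (x 0 * starRingEnd ℂ (x 1)).re * (y 0 * starRingEnd ℂ (y 1)).re = 1 / 4 →
      (star (kvec x y) ⬝ᵥ M.mulVec (kvec x y)).re = 5 / 2) := by
  intro M
  refine ⟨fun x y hx hy => ?_, fun x y _ _ hx hy hxy => ?_⟩
  · have hx' : ‖x 0‖ ^ 2 + ‖x 1‖ ^ 2 = 1 := by rw [← re_star_dotProduct_self, hx, Complex.one_re]
    have hy' : ‖y 0‖ ^ 2 + ‖y 1‖ ^ 2 = 1 := by rw [← re_star_dotProduct_self, hy, Complex.one_re]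
    rw [re_star_kvec_dotProduct_mulVec_kvec, hx', hy']
    linarith [blochZ_mul_div_two_add_blochX_mul_le_one hx' hy']
  · have hx' i := sq_eq_half_of_eq_inv_sqrt_two (hx i)
    have hy' i := sq_eq_half_of_eq_inv_sqrt_two (hy i)
    have hX : blochX x * blochX y = 1 := by
      unfold blochX
      linear_combination 4 * hxy
    rw [re_star_kvec_dotProduct_mulVec_kvec, hX, blochZ, blochZ, hx', hx', hy', hy']
    norm_num
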